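/- Let F : ℝ² → ℝ² be an invertible affine map, F(x̂) = J x̂ + b with J an invertible linear map, and let v̂ : ℝ² → ℝ² be continuous with Piola transform v(x) = (1/|det J|) · J (v̂(F⁻¹(x))). Let ê = [p̂, q̂] be a segment with p̂ ≠ q̂ and let e = [F(p̂), F(q̂)] be its image. Define R : ℝ² → ℝ² by R(u₁, u₂) = (u₂, −u₁) (rotation by 90° clockwise), and set n̂ = R(q̂ − p̂)/‖q̂ − p̂‖ and n = R(F(q̂) − F(p̂))/‖F(q̂) − F(p̂)‖. Then the normal moments satisfy ∫_e v · n ds = sign(det J) · ∫_ê v̂ · n̂ dŝ. -/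

import Mathlib

open scoped RealInnerProductSpace
open MeasureTheory

/-! The unnormalised normal `rot (q - p)` absorbs the length factor `‖q - p‖` of `ds`, so each
normal moment is `∫₀¹ ⟪w(x(t)), rot (q - p)⟫ dt`. Since `⟪a, rot u⟫` is the determinant of
`(a, u)`, `⟪J a, rot (J u)⟫ = det J * ⟪a, rot u⟫`; against the Piola factor `|det J|⁻¹` this leaves
`sign (det J)` in front of the reference integrand, pointwise in `t`. -/

noncomputable section

/-- Shorthand for the plane. -/
abbrev E2 := EuclideanSpace ℝ (Fin 2)

/-- The normal moment `∫_e w · n ds` of `w` over the segment `e = [p, q]`,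
computed via the arclength parametrization `t ↦ (1 - t) p + t q`, `ds = ‖q - p‖ dt`. -/
def segInt (p q n : E2) (w : E2 → E2) : ℝ :=
  ∫ t in (0:ℝ)..1, ⟪w ((1 - t) • p + t • q), n⟫ * ‖q - p‖

/-- Rotation by 90° clockwise: `R(u₁, u₂) = (u₂, -u₁)`. -/
def rot (u : E2) : E2 := (WithLp.equiv 2 (Fin 2 → ℝ)).symm ![u 1, -u 0]

lemma real_inner_rot_eq_det (a u : E2) :
    ⟪a, rot u⟫ = (EuclideanSpace.basisFun (Fin 2) ℝ).toBasis.det ![a, u] := by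
  rw [Module.Basis.det_apply, Matrix.det_fin_two, PiLp.inner_apply, Fin.sum_univ_two]
  simp [Module.Basis.toMatrix_apply, rot]
  ring

lemma real_inner_map_rot_map (J : E2 →ₗ[ℝ] E2) (a u : E2) :
    ⟪J a, rot (J u)⟫ = LinearMap.det J * ⟪a, rot u⟫ := by
  rw [real_inner_rot_eq_det, real_inner_rot_eq_det, ← Module.Basis.det_comp]
  congr 1
  ext i : 1
  fin_cases i <;> rfl

lemma abs_inv_mul_self_eq_sign {x : ℝ} (hx : x ≠ 0) : |x|⁻¹ * x = Real.sign x := by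
  rcases hx.lt_or_gt with h | h
  · rw [abs_of_neg h, Real.sign_of_neg h, inv_neg, neg_mul, inv_mul_cancel₀ h.ne]
  · rw [abs_of_pos h, Real.sign_of_pos h, inv_mul_cancel₀ h.ne']

lemma one_sub_smul_add_smul_map_add {R M N F : Type*} [CommRing R] [AddCommGroup M] [Module R M]
    [AddCommGroup N] [Module R N] [FunLike F M N] [LinearMapClass F R M N]
    (f : F) (b : N) (p q : M) (t : R) :
    (1 - t) • (f p + b) + t • (f q + b) = f ((1 - t) • p + t • q) + b := by
  simp only [map_add, map_smul]
  module

lemma segInt_inv_norm_smul {p q : E2} (hpq : p ≠ q) (r : E2) (w : E2 → E2) :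
    segInt p q (‖q - p‖⁻¹ • r) w =
      ∫ t in (0:ℝ)..1, ⟪w ((1 - t) • p + t • q), r⟫ := by
  have hnorm : ‖q - p‖ ≠ 0 := norm_ne_zero_iff.2 (sub_ne_zero.2 hpq.symm)
  unfold segInt
  congr 1 with t
  rw [real_inner_smul_right, mul_comm, ← mul_assoc, mul_inv_cancel₀ hnorm, one_mul]

theorem piola_preserves_normal_moment_general
    (J : E2 →L[ℝ] E2) (b : E2)
    (hJ : LinearMap.det (J : E2 →ₗ[ℝ] E2) ≠ 0)
    (vhat v : E2 → E2)
    (hv : ∀ xhat, v (J xhat + b) =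
      |LinearMap.det (J : E2 →ₗ[ℝ] E2)|⁻¹ • J (vhat xhat))
    (phat qhat : E2) (hpq : phat ≠ qhat)
    (nhat n : E2)
    (hnhat : nhat = ‖qhat - phat‖⁻¹ • rot (qhat - phat))
    (hn : n = ‖(J qhat + b) - (J phat + b)‖⁻¹ • rot ((J qhat + b) - (J phat + b))) :
    segInt (J phat + b) (J qhat + b) n v =
      Real.sign (LinearMap.det (J : E2 →ₗ[ℝ] E2)) * segInt phat qhat nhat vhat := by
  set L : E2 →ₗ[ℝ] E2 := ↑J
  have hL : Function.Injective L :=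
    ((Module.End.isUnit_iff L).1 ((LinearMap.isUnit_iff_isUnit_det L).2 hJ.isUnit)).1
  have hFpq : J phat + b ≠ J qhat + b := fun h => hpq (hL (add_right_cancel h))
  have hFsub : (J qhat + b) - (J phat + b) = L (qhat - phat) := by
    rw [add_sub_add_right_eq_sub, map_sub]; rfl
  rw [hn, hnhat, segInt_inv_norm_smul hFpq, segInt_inv_norm_smul hpq, hFsub,
    ← intervalIntegral.integral_const_mul]
  congr 1 with t
  rw [one_sub_smul_add_smul_map_add J, hv, real_inner_smul_left,
    ← ContinuousLinearMap.coe_coe J, real_inner_map_rot_map,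
    ← mul_assoc, abs_inv_mul_self_eq_sign hJ]

/-- Let `F(x̂) = J x̂ + b` be an invertible affine map of the plane and
`v` the Piola transform of a continuous map `v̂`.  For a segment `ê = [p̂, q̂]` with image
`e = [F(p̂), F(q̂)]` and the corresponding unit normals `n̂ = R(q̂ - p̂)/‖q̂ - p̂‖`,
`n = R(F(q̂) - F(p̂))/‖F(q̂) - F(p̂)‖`, the normal moments satisfy
`∫_e v · n ds = sign(det J) ∫_ê v̂ · n̂ dŝ`. -/
theorem piola_preserves_normal_moment
    (J : E2 →L[ℝ] E2) (b : E2)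
    (hJ : LinearMap.det (J : E2 →ₗ[ℝ] E2) ≠ 0)
    (vhat v : E2 → E2) (hcont : Continuous vhat)
    (hv : ∀ xhat, v (J xhat + b) =
      |LinearMap.det (J : E2 →ₗ[ℝ] E2)|⁻¹ • J (vhat xhat))
    (phat qhat : E2) (hpq : phat ≠ qhat)
    (nhat n : E2)
    (hnhat : nhat = ‖qhat - phat‖⁻¹ • rot (qhat - phat))
    (hn : n = ‖(J qhat + b) - (J phat + b)‖⁻¹ • rot ((J qhat + b) - (J phat + b))) :
    segInt (J phat + b) (J qhat + b) n v =
      Real.sign (LinearMap.det (J : E2 →ₗ[ℝ] E2)) * segInt phat qhat nhat vhat :=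
  piola_preserves_normal_moment_general J b hJ vhat v hv phat qhat hpq nhat n hnhat hn

end
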